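/- arXiv:2410.21690 — 5 statements merged into one kernel-verified Lean document; each statement's English description precedes it below -/
import Mathlib

section
/- For a Lipschitz continuous function f on [-1,1] with Lipschitz constant λ > 0, and for any integer k ≥ 1, the inner product of f with the weighted k-th normalized Chebyshev polynomial satisfies |∫_{-1}^{1} f(x) · T̄_k(x) · (1-x²)^{-1/2} dx| ≤ 2λ/k, where T̄_k = T_k/√(π/2) is the normalized Chebyshev polynomial of the first kind. -/
/-!
Substituting `x = cos θ` turns the weighted integral into `(∫ θ in 0..π, f (cos θ) * cos (k θ)) / c`
with `c = √(π/2) ≥ 1`. The function `f ∘ cos` is `λ`-Lipschitz, hence absolutely continuous with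
derivative bounded by `λ`; integrating by parts against `sin (k θ) / k` bounds the cosine
coefficient by `(λ / k) ∫ θ in 0..π, |sin (k θ)| = 2λ / k`.
-/

open Real MeasureTheory Set intervalIntegral

theorem Real.cos_image_Ioo_zero_pi : cos '' Ioo 0 π = Ioo (-1) 1 := by
  ext y
  constructor
  · rintro ⟨θ, hθ, rfl⟩
    have hθ' : arccos (cos θ) = θ := arccos_cos hθ.1.le hθ.2.le
    exact ⟨arccos_lt_pi.1 (hθ'.symm ▸ hθ.2), arccos_pos.1 (hθ'.symm ▸ hθ.1)⟩
  · intro hy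
    exact ⟨arccos y, ⟨arccos_pos.2 hy.2, arccos_lt_pi.2 hy.1⟩, cos_arccos hy.1.le hy.2.le⟩

/-- No integrability hypothesis is needed: the change of variables formula for injective maps
holds for arbitrary integrands. -/
theorem integral_mul_inv_sqrt_one_sub_sq_eq_integral_comp_cos (h : ℝ → ℝ) :
    ∫ x in (-1 : ℝ)..1, h x * (√(1 - x ^ 2))⁻¹ = ∫ θ in 0..π, h (cos θ) := by
  rw [integral_of_le (by norm_num), integral_of_le pi_pos.le, integral_Ioc_eq_integral_Ioo,
    integral_Ioc_eq_integral_Ioo, ← cos_image_Ioo_zero_pi,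
    integral_image_eq_integral_abs_deriv_smul measurableSet_Ioo
      (fun θ _ => (hasDerivAt_cos θ).hasDerivWithinAt) (injOn_cos.mono Ioo_subset_Icc_self)]
  refine setIntegral_congr_fun measurableSet_Ioo fun θ hθ => ?_
  have hsin : 0 < sin θ := sin_pos_of_pos_of_lt_pi hθ.1 hθ.2
  rw [← sin_sq, sqrt_sq hsin.le, abs_neg, abs_of_pos hsin, smul_eq_mul,
    mul_left_comm, mul_inv_cancel₀ hsin.ne', mul_one]

theorem integral_abs_sin_nat_mul {k : ℕ} (hk : k ≠ 0) : ∫ θ in 0..π, |sin (k * θ)| = 2 := by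
  have hkR : (k : ℝ) ≠ 0 := Nat.cast_ne_zero.2 hk
  have hper : Function.Periodic (fun u => |sin u|) π := fun u => by simp [sin_add_pi]
  have hone : ∫ u in (0 : ℝ)..π, |sin u| = 2 := by
    rw [integral_congr fun u hu => abs_of_nonneg <|
      sin_nonneg_of_mem_Icc (uIcc_of_le pi_pos.le ▸ hu), integral_sin]
    norm_num
  have hk_periods := hper.intervalIntegral_add_zsmul_eq k 0 fun _ _ =>
    (continuous_abs.comp continuous_sin).intervalIntegrable _ _
  simp only [zero_add, zsmul_eq_mul, Int.cast_natCast] at hk_periods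
  rw [integral_comp_mul_left (fun u => |sin u|) hkR, mul_zero, hk_periods, hone, smul_eq_mul]
  field_simp

theorem abs_integral_mul_cos_nat_mul_le {g : ℝ → ℝ} {K : NNReal} (hg : LipschitzWith K g)
    {k : ℕ} (hk : k ≠ 0) : |∫ θ in 0..π, g θ * cos (k * θ)| ≤ 2 * K / k := by
  have hkR : (0 : ℝ) < k := Nat.cast_pos.2 (Nat.pos_of_ne_zero hk)
  set s : ℝ → ℝ := fun θ => sin (k * θ) / k
  have hs : ∀ θ, HasDerivAt s (cos (k * θ)) θ := fun θ => by
    simpa [hkR.ne'] using ((hasDerivAt_id θ).const_mul (k : ℝ)).sin.div_const (k : ℝ)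
  have hs_ac : AbsolutelyContinuousOnInterval s 0 π :=
    (by fun_prop : ContDiff ℝ 1 s).contDiffOn.absolutelyContinuousOnInterval
  have hparts := (hg.lipschitzOnWith (s := uIcc 0 π)).absolutelyContinuousOnInterval
    |>.integral_mul_deriv_eq_deriv_mul hs_ac
  simp only [fun θ => (hs θ).deriv, s, sin_nat_mul_pi, mul_zero, sin_zero, zero_div, sub_zero,
    zero_sub] at hparts
  rw [hparts, abs_neg]
  calc ‖∫ θ in 0..π, deriv g θ * (sin (k * θ) / k)‖
      ≤ ∫ θ in 0..π, K / k * |sin (k * θ)| := by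
        refine norm_integral_le_of_norm_le pi_pos.le (Filter.Eventually.of_forall fun θ _ => ?_) ?_
        · calc ‖deriv g θ * (sin (k * θ) / k)‖ = ‖deriv g θ‖ * (|sin (k * θ)| / k) := by
                simp only [norm_mul, norm_div, Real.norm_eq_abs, Nat.abs_cast]
            _ ≤ K * (|sin (k * θ)| / k) := by gcongr; exact norm_deriv_le_of_lipschitz hg
            _ = K / k * |sin (k * θ)| := by ring
        · exact (continuous_const.mul (by fun_prop)).intervalIntegrable _ _
    _ = 2 * K / k := by
        rw [intervalIntegral.integral_const_mul, integral_abs_sin_nat_mul hk]; ring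

/-- For a Lipschitz continuous function `f` on `[-1,1]` with Lipschitz constant
`lam > 0`, and any `k ≥ 1`, the inner product of `f` with the weighted `k`-th normalized
Chebyshev polynomial `T̄_k = T_k / √(π/2)` against the weight `(1-x²)^{-1/2}` is at most
`2·lam/k` in absolute value. -/
theorem stmt_0 (f : ℝ → ℝ) (lam : ℝ) (hlam : 0 < lam)
    (hf : LipschitzOnWith (Real.toNNReal lam) f (Set.Icc (-1 : ℝ) 1))
    (k : ℕ) (hk : 1 ≤ k) :
    |∫ x in (-1 : ℝ)..1,
        f x * ((Polynomial.Chebyshev.T ℝ (k : ℤ)).eval x / Real.sqrt (Real.pi / 2)) *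
          (Real.sqrt (1 - x ^ 2))⁻¹| ≤ 2 * lam / k := by
  have hg : LipschitzWith (toNNReal lam) (f ∘ cos) := by
    simpa using hf.comp lipschitzWith_cos.lipschitzOnWith (s := univ)
      fun θ _ => ⟨neg_one_le_cos θ, cos_le_one θ⟩
  have hc : 1 ≤ √(π / 2) := one_le_sqrt.2 (by linarith [pi_gt_three])
  have hJ := abs_integral_mul_cos_nat_mul_le hg (Nat.one_le_iff_ne_zero.1 hk)
  rw [coe_toNNReal lam hlam.le] at hJ
  simp only [integral_mul_inv_sqrt_one_sub_sq_eq_integral_comp_cos,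
    Polynomial.Chebyshev.T_real_cos, Int.cast_natCast, ← mul_div_assoc, intervalIntegral.integral_div, abs_div,
    abs_of_pos (zero_lt_one.trans_le hc)]
  exact (div_le_self (abs_nonneg _) hc).trans hJ
end

section
/- Let D ∈ ℝ^{n×n} be symmetric and C ∈ ℝ^{n×m} have orthonormal columns. Then there exist m eigenvalues α_1, ..., α_m of D such that for every i ∈ [m], |α_i - λ_i(CᵀDC)| ≤ ‖DC - C·CᵀDC‖₂, where λ_i(CᵀDC) denote the eigenvalues of the m×m symmetric matrix CᵀDC. -/
/-! The residual `R = DC - C(CᵀDC)` satisfies `CᵀR = 0`. Hence `A = D - (RCᵀ + CRᵀ)` is symmetric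
with `AC = C(CᵀDC)`: since `C` is injective, every eigenspace of `CᵀDC` embeds into the
eigenspace of `A` for the same eigenvalue, so the spectrum of `CᵀDC` sits inside that of `A`,
multiplicities included. The perturbation `RCᵀ + CRᵀ` maps `range C` into its orthogonal
complement through `R`, and that complement back into `range C` through `Rᵀ`, so its norm is at
most `‖R‖`. Weyl's inequality `|λₖ(D) - λₖ(A)| ≤ ‖D - A‖` (for the decreasingly sorted
eigenvalues, via Courant–Fischer) then pairs each eigenvalue of `CᵀDC` with one of `D`. -/

open Matrix

noncomputable def specNorm {n m : ℕ} (A : Matrix (Fin n) (Fin m) ℝ) : ℝ :=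
  ‖LinearMap.toContinuousLinearMap (Matrix.toEuclideanLin A)‖

open Finset Module Submodule
open scoped InnerProductSpace Matrix.Norms.L2Operator

theorem Function.Embedding.exists_comp_eq_of_card_fiber_le {α β γ : Type*} [Fintype α]
    [Fintype β] [DecidableEq γ] {f : α → γ} {g : β → γ}
    (h : ∀ c, #{a | f a = c} ≤ #{b | g b = c}) : ∃ e : α ↪ β, g ∘ e = f := by
  have φ (c : γ) : {a // f a = c} ↪ {b // g b = c} :=
    (Function.Embedding.nonempty_of_card_le (by simpa only [Fintype.card_subtype] using h c)).some
  have hφ : Function.Injective (Sigma.map id fun c => φ c) :=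
    Function.injective_id.sigma_map (β₂ := fun c => {b // g b = c}) fun c => (φ c).injective
  exact ⟨⟨Equiv.sigmaFiberEquiv g ∘ Sigma.map id (fun c => φ c) ∘ (Equiv.sigmaFiberEquiv f).symm,
    (Equiv.sigmaFiberEquiv g).injective.comp <| hφ.comp (Equiv.sigmaFiberEquiv f).symm.injective⟩,
    funext fun a => (φ (f a) ⟨a, rfl⟩).2⟩

theorem Module.End.finrank_eigenspace_le_of_comp_eq {K V W : Type*} [Field K] [AddCommGroup V]
    [Module K V] [AddCommGroup W] [Module K W] [FiniteDimensional K V]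
    {f : End K V} {g : End K W} {c : W →ₗ[K] V} (hc : Function.Injective c)
    (hfc : f ∘ₗ c = c ∘ₗ g) (μ : K) :
    finrank K (eigenspace g μ) ≤ finrank K (eigenspace f μ) := by
  refine LinearMap.finrank_le_finrank_of_injective (f := c.restrict fun x hx => ?_)
    fun x y hxy => Subtype.ext (hc congr(($hxy : V)))
  rw [mem_eigenspace_iff] at hx ⊢
  rw [← LinearMap.comp_apply, hfc, LinearMap.comp_apply, hx, map_smul]

section Eigenvectors

variable {𝕜 E ι : Type*} [RCLike 𝕜] [NormedAddCommGroup E] [InnerProductSpace 𝕜 E]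
  {T : E →ₗ[𝕜] E} {v : ι → E} {μ : ι → ℝ}

lemma Orthonormal.finrank_span_image_finset (hv : Orthonormal 𝕜 v) (s : Finset ι) :
    finrank 𝕜 (span 𝕜 (v '' s)) = #s := by
  rw [Set.image_eq_range]
  exact (finrank_span_eq_card (hv.linearIndependent.comp _ Subtype.val_injective)).trans (by simp)

lemma Orthonormal.norm_sum_smul_sq (hv : Orthonormal 𝕜 v) (s : Finset ι) (c : ι → 𝕜) :
    ‖∑ i ∈ s, c i • v i‖ ^ 2 = ∑ i ∈ s, ‖c i‖ ^ 2 := by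
  rw [norm_sq_eq_re_inner (𝕜 := 𝕜), hv.inner_sum, map_sum]
  simp [RCLike.conj_mul]

lemma Orthonormal.re_inner_map_sum_smul (hv : Orthonormal 𝕜 v)
    (hμ : ∀ i, T (v i) = (μ i : 𝕜) • v i) (s : Finset ι) (c : ι → 𝕜) :
    RCLike.re ⟪T (∑ i ∈ s, c i • v i), ∑ i ∈ s, c i • v i⟫_𝕜 = ∑ i ∈ s, μ i * ‖c i‖ ^ 2 := by
  simp only [map_sum, map_smul, hμ, smul_smul, hv.inner_sum, map_mul, RCLike.conj_ofReal,
    mul_right_comm _ (μ _ : 𝕜), RCLike.conj_mul]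
  norm_cast
  simp [mul_comm]

lemma Orthonormal.re_inner_map_le_of_mem_span (hv : Orthonormal 𝕜 v)
    (hμ : ∀ i, T (v i) = (μ i : 𝕜) • v i) {s : Finset ι} {a : ℝ} (ha : ∀ i ∈ s, μ i ≤ a)
    {x : E} (hx : x ∈ span 𝕜 (v '' s)) : RCLike.re ⟪T x, x⟫_𝕜 ≤ a * ‖x‖ ^ 2 := by
  obtain ⟨c, rfl⟩ := (mem_span_image_finset_iff_exists_fun' 𝕜).1 hx
  rw [hv.re_inner_map_sum_smul hμ, hv.norm_sum_smul_sq, mul_sum]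
  exact sum_le_sum fun i hi => mul_le_mul_of_nonneg_right (ha i hi) (sq_nonneg _)

lemma Orthonormal.le_re_inner_map_of_mem_span (hv : Orthonormal 𝕜 v)
    (hμ : ∀ i, T (v i) = (μ i : 𝕜) • v i) {s : Finset ι} {a : ℝ} (ha : ∀ i ∈ s, a ≤ μ i)
    {x : E} (hx : x ∈ span 𝕜 (v '' s)) : a * ‖x‖ ^ 2 ≤ RCLike.re ⟪T x, x⟫_𝕜 := by
  obtain ⟨c, rfl⟩ := (mem_span_image_finset_iff_exists_fun' 𝕜).1 hx
  rw [hv.re_inner_map_sum_smul hμ, hv.norm_sum_smul_sq, mul_sum]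
  exact sum_le_sum fun i hi => mul_le_mul_of_nonneg_right (ha i hi) (sq_nonneg _)

end Eigenvectors

theorem LinearMap.IsSymmetric.eigenvalues_le_add_of_re_inner_le {𝕜 E : Type*} [RCLike 𝕜]
    [NormedAddCommGroup E] [InnerProductSpace 𝕜 E] [FiniteDimensional 𝕜 E]
    {T T' : E →ₗ[𝕜] E} {n : ℕ} (hT : T.IsSymmetric) (hT' : T'.IsSymmetric)
    (hn : finrank 𝕜 E = n) {r : ℝ}
    (h : ∀ x, RCLike.re ⟪T' x, x⟫_𝕜 ≤ RCLike.re ⟪T x, x⟫_𝕜 + r * ‖x‖ ^ 2) (k : Fin n) :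
    hT'.eigenvalues hn k ≤ hT.eigenvalues hn k + r := by
  set V' := span 𝕜 (hT'.eigenvectorBasis hn '' Iic k)
  set V := span 𝕜 (hT.eigenvectorBasis hn '' Ici k)
  have hdim : finrank 𝕜 E < finrank 𝕜 V' + finrank 𝕜 V := by
    rw [(hT'.eigenvectorBasis hn).orthonormal.finrank_span_image_finset,
      (hT.eigenvectorBasis hn).orthonormal.finrank_span_image_finset, Fin.card_Iic, Fin.card_Ici]
    omega
  obtain ⟨x, hx, hx0⟩ := (V' ⊓ V).ne_bot_iff.1 fun hbot =>
    hdim.not_ge (finrank_add_finrank_le_of_disjoint (disjoint_iff.2 hbot))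
  have hT'x := (hT'.eigenvectorBasis hn).orthonormal.le_re_inner_map_of_mem_span
    (hT'.apply_eigenvectorBasis hn) (fun i hi => hT'.eigenvalues_antitone hn (mem_Iic.1 hi)) hx.1
  have hTx := (hT.eigenvectorBasis hn).orthonormal.re_inner_map_le_of_mem_span
    (hT.apply_eigenvectorBasis hn) (fun i hi => hT.eigenvalues_antitone hn (mem_Ici.1 hi)) hx.2
  have hk : hT'.eigenvalues hn k * ‖x‖ ^ 2 ≤ (hT.eigenvalues hn k + r) * ‖x‖ ^ 2 := by
    linarith [h x]
  exact le_of_mul_le_mul_right hk (by positivity)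

open ContinuousLinearMap in
theorem ContinuousLinearMap.norm_comp_adjoint_add_comp_adjoint_le {𝕜 E F : Type*} [RCLike 𝕜]
    [NormedAddCommGroup E] [InnerProductSpace 𝕜 E] [CompleteSpace E]
    [NormedAddCommGroup F] [InnerProductSpace 𝕜 F] [CompleteSpace F]
    {c r : F →L[𝕜] E} (hc : adjoint c ∘L c = 1) (hcr : adjoint c ∘L r = 0) :
    ‖r ∘L adjoint c + c ∘L adjoint r‖ ≤ ‖r‖ := by
  refine opNorm_le_bound _ (norm_nonneg _) fun x => ?_
  set u := adjoint c x
  set z := x - c u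
  have hc_norm (w : F) : ‖c w‖ = ‖w‖ := (norm_map_iff_adjoint_comp_self c).2 hc w
  have hx : ‖x‖ ^ 2 = ‖u‖ ^ 2 + ‖z‖ ^ 2 := by
    have : ⟪c u, z⟫_𝕜 = 0 := by
      rw [← adjoint_inner_right, map_sub, ← comp_apply _ c, hc]; simp [u]
    rw [← hc_norm u, ← add_sub_cancel (c u) x, norm_add_sq (𝕜 := 𝕜), this]
    simp [z]
  have hEx : ‖(r ∘L adjoint c + c ∘L adjoint r) x‖ ^ 2 = ‖r u‖ ^ 2 + ‖adjoint r x‖ ^ 2 := by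
    have : ⟪r u, c (adjoint r x)⟫_𝕜 = 0 := by
      rw [← adjoint_inner_left, ← comp_apply _ r, hcr]; simp
    rw [← hc_norm, _root_.add_apply, comp_apply, comp_apply, norm_add_sq (𝕜 := 𝕜), this]
    simp [u]
  have hrz : adjoint r x = adjoint r z := by
    have hrc : adjoint r ∘L c = 0 := by
      simpa only [adjoint_comp, adjoint_adjoint, map_zero] using congr(adjoint $hcr)
    simp [z, ← comp_apply, hrc]
  have hu : ‖r u‖ ≤ ‖r‖ * ‖u‖ := r.le_opNorm u
  have hz : ‖adjoint r z‖ ≤ ‖r‖ * ‖z‖ := adjoint.norm_map r ▸ (adjoint r).le_opNorm z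
  have hsq : ‖(r ∘L adjoint c + c ∘L adjoint r) x‖ ^ 2 ≤ (‖r‖ * ‖x‖) ^ 2 := by
    rw [hEx, mul_pow, hx, mul_add, hrz, ← mul_pow, ← mul_pow]
    gcongr
  exact (pow_le_pow_iff_left₀ (norm_nonneg _) (by positivity) two_ne_zero).1 hsq

namespace Matrix

variable {𝕜 l m n : Type*} [RCLike 𝕜] [Fintype l] [Fintype m] [DecidableEq m]
  [Fintype n] [DecidableEq n]

lemma toContinuousLinearMap_toEuclideanLin_mul (M : Matrix l m 𝕜) (N : Matrix m n 𝕜) :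
    LinearMap.toContinuousLinearMap (toEuclideanLin (M * N)) =
      LinearMap.toContinuousLinearMap (toEuclideanLin M) ∘L
        LinearMap.toContinuousLinearMap (toEuclideanLin N) := by
  ext1 x
  simp [toLpLin_mul_same]

lemma toContinuousLinearMap_toEuclideanLin_conjTranspose (M : Matrix m n 𝕜) :
    LinearMap.toContinuousLinearMap (toEuclideanLin Mᴴ) =
      ContinuousLinearMap.adjoint (LinearMap.toContinuousLinearMap (toEuclideanLin M)) := by
  rw [toEuclideanLin_conjTranspose_eq_adjoint]
  rfl

theorem l2_opNorm_mul_conjTranspose_add_le {C R : Matrix n m 𝕜} (hC : Cᴴ * C = 1)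
    (hCR : Cᴴ * R = 0) : ‖R * Cᴴ + C * Rᴴ‖ ≤ ‖R‖ := by
  simp only [l2_opNorm_def, LinearEquiv.trans_apply, map_add,
    toContinuousLinearMap_toEuclideanLin_mul, toContinuousLinearMap_toEuclideanLin_conjTranspose]
  refine ContinuousLinearMap.norm_comp_adjoint_add_comp_adjoint_le ?_ ?_
  · rw [← toContinuousLinearMap_toEuclideanLin_conjTranspose,
      ← toContinuousLinearMap_toEuclideanLin_mul, hC]
    ext1 x
    simp
  · rw [← toContinuousLinearMap_toEuclideanLin_conjTranspose,
      ← toContinuousLinearMap_toEuclideanLin_mul, hCR]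
    simp

namespace IsHermitian

variable {A B : Matrix n n 𝕜}

lemma card_filter_eigenvalues_eq (hA : A.IsHermitian) (μ : ℝ) :
    #{i | hA.eigenvalues i = μ} = finrank 𝕜 (End.eigenspace (toEuclideanLin A) μ) := by
  rw [← LinearMap.IsSymmetric.card_filter_eigenvalues_eq (isSymmetric_toEuclideanLin_iff.mpr hA)
    finrank_euclideanSpace]
  refine card_equiv (Fintype.equivOfCardEq (Fintype.card_fin _)).symm fun i => ?_
  simp only [mem_filter, mem_univ, true_and]
  simp [eigenvalues, eigenvalues₀]

theorem exists_eigenvalues_comp_embedding_eq_of_mul_eq_mul {S : Matrix m m 𝕜} {C : Matrix n m 𝕜}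
    (hA : A.IsHermitian) (hS : S.IsHermitian) (hC : Function.Injective C.mulVec)
    (hAC : A * C = C * S) : ∃ e : m ↪ n, hA.eigenvalues ∘ e = hS.eigenvalues := by
  refine Function.Embedding.exists_comp_eq_of_card_fiber_le fun μ => ?_
  rw [hS.card_filter_eigenvalues_eq, hA.card_filter_eigenvalues_eq]
  refine End.finrank_eigenspace_le_of_comp_eq (c := toEuclideanLin C)
    (fun x y hxy => WithLp.ofLp_injective 2 (hC congr(WithLp.ofLp $hxy))) ?_ _
  rw [← toLpLin_mul_same, hAC, toLpLin_mul_same]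

lemma eigenvalues_le_add_norm_sub (hA : A.IsHermitian) (hB : B.IsHermitian) (i : n) :
    hA.eigenvalues i ≤ hB.eigenvalues i + ‖A - B‖ := by
  refine LinearMap.IsSymmetric.eigenvalues_le_add_of_re_inner_le _ _ _ (fun x => ?_) _
  have hAB : RCLike.re ⟪toEuclideanLin (A - B) x, x⟫_𝕜 ≤ ‖A - B‖ * ‖x‖ ^ 2 := by
    refine (re_inner_le_norm _ _).trans ?_
    rw [sq, ← mul_assoc]
    exact mul_le_mul_of_nonneg_right
      (((toEuclideanLin.trans LinearMap.toContinuousLinearMap) (A - B)).le_opNorm x) (norm_nonneg _)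
  rw [map_sub, LinearMap.sub_apply, inner_sub_left, map_sub] at hAB
  linarith

/-- Both eigenvalue lists are the decreasingly sorted ones, reindexed by the same equivalence
`Fin (card n) ≃ n`, so Weyl's inequality pairs them index by index. -/
theorem abs_eigenvalues_sub_le_norm_sub (hA : A.IsHermitian) (hB : B.IsHermitian) (i : n) :
    |hA.eigenvalues i - hB.eigenvalues i| ≤ ‖A - B‖ := by
  rw [abs_sub_le_iff, sub_le_iff_le_add', sub_le_iff_le_add', norm_sub_rev A B]
  exact ⟨norm_sub_rev A B ▸ hA.eigenvalues_le_add_norm_sub hB i,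
    hB.eigenvalues_le_add_norm_sub hA i⟩

end IsHermitian

end Matrix

/-- Kahan residual bound, Parlett Thm 11.5.1: Let `D ∈ ℝ^{n×n}` be symmetric
and `C ∈ ℝ^{n×m}` have orthonormal columns. Then there are `m` eigenvalues of `D` (an
injective selection) such that each is within `‖DC - C·CᵀDC‖₂` of the corresponding
eigenvalue of `CᵀDC`. -/
theorem stmt_4 {n m : ℕ} (D : Matrix (Fin n) (Fin n) ℝ) (hD : D.IsHermitian)
    (C : Matrix (Fin n) (Fin m) ℝ) (hC : Cᵀ * C = 1)
    (hS : (Cᵀ * D * C).IsHermitian) :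
    ∃ f : Fin m → Fin n, Function.Injective f ∧
      ∀ i, |hD.eigenvalues (f i) - hS.eigenvalues i| ≤
        specNorm (D * C - C * (Cᵀ * D * C)) := by
  have hC' : Cᴴ * C = 1 := by rwa [conjTranspose_eq_transpose_of_trivial]
  set R := D * C - C * (Cᵀ * D * C)
  have hCR : Cᴴ * R = 0 := by simp [R, Matrix.mul_sub, ← Matrix.mul_assoc, hC]
  set A := D - (R * Cᴴ + C * Rᴴ)
  have hA : A.IsHermitian := hD.sub <| by
    simpa only [conjTranspose_mul, conjTranspose_conjTranspose] using
      isHermitian_add_transpose_self (R * Cᴴ)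
  have hAC : A * C = C * (Cᵀ * D * C) := by
    have hRC : Rᴴ * C = 0 := by
      rw [← conjTranspose_conjTranspose C, ← conjTranspose_mul, hCR, conjTranspose_zero]
    rw [Matrix.sub_mul, Matrix.add_mul, Matrix.mul_assoc, Matrix.mul_assoc, hC', hRC,
      Matrix.mul_one, Matrix.mul_zero, add_zero, sub_sub_cancel]
  have hC_inj : Function.Injective C.mulVec := fun x y hxy => by
    simpa [mulVec_mulVec, hC] using congr(Cᵀ *ᵥ $hxy)
  obtain ⟨e, he⟩ := hA.exists_eigenvalues_comp_embedding_eq_of_mul_eq_mul hS hC_inj hAC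
  refine ⟨e, e.injective, fun i => ?_⟩
  calc |hD.eigenvalues (e i) - hS.eigenvalues i|
      = |hD.eigenvalues (e i) - hA.eigenvalues (e i)| := by rw [← he]; rfl
    _ ≤ ‖D - A‖ := hD.abs_eigenvalues_sub_le_norm_sub hA (e i)
    _ ≤ ‖R‖ := by rw [sub_sub_cancel]; exact l2_opNorm_mul_conjTranspose_add_le hC' hCR
end

section
/- Let A ∈ ℝ^{n×n} be symmetric with eigendecomposition A = UΛUᵀ where eigenvalues are sorted by decreasing magnitude, and let U_p ∈ ℝ^{n×p} contain the eigenvectors corresponding to the p largest-magnitude eigenvalues. Let Q ∈ ℝ^{n×r} have orthonormal columns, and suppose ‖U_p - QQᵀU_p‖_F ≤ ε. Then ‖U_pᵀAU_p - U_pᵀQQᵀAQQᵀU_p‖₂ ≤ 3ε‖A‖₂, and consequently, by Weyl's inequality, |λ_i(U_pᵀQQᵀAQQᵀU_p) - λ_i(A)| ≤ 3ε‖A‖₂ for every i ∈ [p]. -/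
/-!
Put `P = QQᵀ`, a symmetric contraction, and `E = U - PU`. Then
`UᵀAU - UᵀPAPU = UᵀAE + EᵀA(PU)`, and both terms have spectral norm at most
`‖E‖₂‖A‖₂ ≤ ‖E‖_F‖A‖₂ ≤ ε‖A‖₂`, so the difference is even bounded by `2ε‖A‖₂`.

Since `UᵀAU = diag(lam)`, the eigenvalue estimate is Weyl's inequality, proved by the
Courant–Fischer argument: for eigenvalues `α`, `β` of `M`, `N` sorted decreasingly, the span of
the first `k + 1` eigenvectors of `M` and the span of the last `p - k` eigenvectors of `N` meet in
a nonzero `x`, and there `α k ‖x‖² ≤ ⟪x, Mx⟫` and `⟪x, Nx⟫ ≤ β k ‖x‖²`, whence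
`α k - β k ≤ ‖M - N‖₂`.
-/

open Matrix

noncomputable def frobNorm {n m : ℕ} (A : Matrix (Fin n) (Fin m) ℝ) : ℝ :=
  Real.sqrt (∑ i, ∑ j, (A i j) ^ 2)

open scoped Matrix.Norms.L2Operator RealInnerProductSpace

section L2OpNorm

lemma specNorm_eq_l2_opNorm {p q : ℕ} (A : Matrix (Fin p) (Fin q) ℝ) : specNorm A = ‖A‖ := rfl

lemma l2_opNorm_le_frobNorm {p q : ℕ} (A : Matrix (Fin p) (Fin q) ℝ) : ‖A‖ ≤ frobNorm A := by
  refine ContinuousLinearMap.opNorm_le_bound _ (Real.sqrt_nonneg _) fun x => ?_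
  refine (sq_le_sq₀ (norm_nonneg _) (mul_nonneg (Real.sqrt_nonneg _) (norm_nonneg _))).1 ?_
  rw [mul_pow, Real.sq_sqrt (by positivity), EuclideanSpace.norm_sq_eq,
    EuclideanSpace.norm_sq_eq, Finset.sum_mul]
  refine Finset.sum_le_sum fun i _ => ?_
  simpa [Matrix.mulVec, dotProduct] using
    Finset.sum_mul_sq_le_sq_mul_sq Finset.univ (A i) (fun j => x j)

variable {m n : Type*} [Fintype m] [Fintype n] [DecidableEq n]

lemma l2_opNorm_transpose [DecidableEq m] (A : Matrix m n ℝ) : ‖Aᵀ‖ = ‖A‖ := by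
  rw [← conjTranspose_eq_transpose_of_trivial, l2_opNorm_conjTranspose]

lemma l2_opNorm_le_one_of_transpose_mul_self {U : Matrix m n ℝ} (hU : Uᵀ * U = 1) :
    ‖U‖ ≤ 1 := by
  have h : ‖U‖ * ‖U‖ ≤ 1 := by
    rw [← l2_opNorm_conjTranspose_mul_self, conjTranspose_eq_transpose_of_trivial, hU,
      ← diagonal_one, l2_opNorm_diagonal]
    exact (pi_norm_le_iff_of_nonneg zero_le_one).2 fun _ => by simp
  nlinarith [norm_nonneg U]

lemma l2_opNorm_mul_transpose_le_one [DecidableEq m] {Q : Matrix m n ℝ} (hQ : Qᵀ * Q = 1) :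
    ‖Q * Qᵀ‖ ≤ 1 := by
  have hQ1 := l2_opNorm_le_one_of_transpose_mul_self hQ
  calc ‖Q * Qᵀ‖ ≤ ‖Q‖ * ‖Qᵀ‖ := l2_opNorm_mul _ _
    _ ≤ 1 := by rw [l2_opNorm_transpose]; exact mul_le_one₀ hQ1 (norm_nonneg _) hQ1

lemma l2_opNorm_compress_sub_le [DecidableEq m] (A : Matrix m m ℝ) {U : Matrix m n ℝ}
    (hU : ‖U‖ ≤ 1) {P : Matrix m m ℝ} (hPt : Pᵀ = P) (hP : ‖P‖ ≤ 1) :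
    ‖Uᵀ * A * U - Uᵀ * (P * A * P) * U‖ ≤ 2 * ‖U - P * U‖ * ‖A‖ := by
  set E := U - P * U
  have hdecomp : Uᵀ * A * U - Uᵀ * (P * A * P) * U = Uᵀ * A * E + Eᵀ * A * (P * U) := by
    simp only [E, transpose_sub, transpose_mul, hPt, Matrix.sub_mul, Matrix.mul_sub,
      Matrix.mul_assoc]
    abel
  have hUt : ‖Uᵀ‖ ≤ 1 := by rwa [l2_opNorm_transpose]
  have hPU : ‖P * U‖ ≤ 1 := (l2_opNorm_mul _ _).trans (mul_le_one₀ hP (norm_nonneg _) hU)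
  calc ‖Uᵀ * A * U - Uᵀ * (P * A * P) * U‖
      ≤ ‖Uᵀ * A * E‖ + ‖Eᵀ * A * (P * U)‖ := hdecomp ▸ norm_add_le _ _
    _ ≤ ‖Uᵀ‖ * ‖A‖ * ‖E‖ + ‖Eᵀ‖ * ‖A‖ * ‖P * U‖ := by
        gcongr <;> refine (l2_opNorm_mul _ _).trans ?_ <;> gcongr <;> exact l2_opNorm_mul _ _
    _ ≤ 1 * ‖A‖ * ‖E‖ + ‖E‖ * ‖A‖ * 1 := by rw [l2_opNorm_transpose E]; gcongr
    _ = 2 * ‖E‖ * ‖A‖ := by ring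

end L2OpNorm

section Weyl

variable {E : Type*} [NormedAddCommGroup E] [InnerProductSpace ℝ E]

lemma Orthonormal.inner_eq_zero_of_mem_span_image {ι : Type*} {v : ι → E} (hv : Orthonormal ℝ v)
    {s : Set ι} {i : ι} (hi : i ∉ s) {x : E} (hx : x ∈ Submodule.span ℝ (v '' s)) :
    ⟪v i, x⟫ = 0 := by
  obtain ⟨l, hl, rfl⟩ := (Finsupp.mem_span_image_iff_linearCombination ℝ).1 hx
  rw [real_inner_comm]
  exact hv.inner_finsupp_eq_zero hi hl

lemma Orthonormal.finrank_span_image {ι : Type*} {v : ι → E} (hv : Orthonormal ℝ v)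
    (s : Finset ι) : Module.finrank ℝ (Submodule.span ℝ (v '' s)) = s.card := by
  rw [Set.image_eq_range]
  exact (finrank_span_eq_card
    (hv.linearIndependent.comp ((↑) : ↥(s : Set ι) → ι) Subtype.val_injective)).trans (by simp)

namespace OrthonormalBasis

variable {ι : Type*} [Fintype ι] (b : OrthonormalBasis ι ℝ E) {T : E →ₗ[ℝ] E} {α : ι → ℝ}

lemma inner_apply_self_eq_sum (hT : ∀ i, T (b i) = α i • b i) (x : E) :
    ⟪x, T x⟫ = ∑ i, α i * ⟪b i, x⟫ ^ 2 := by
  have hTx : T x = ∑ i, (α i * ⟪b i, x⟫) • b i := by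
    conv_lhs => rw [← b.sum_repr' x]
    simp only [map_sum, map_smul, hT, smul_smul, mul_comm]
  simp only [hTx, inner_sum, real_inner_smul_right, real_inner_comm x, sq, mul_assoc]

variable [LinearOrder ι]

lemma le_inner_apply_self (hT : ∀ i, T (b i) = α i • b i) (hα : Antitone α) {k : ι} {x : E}
    (hx : ∀ i, k < i → ⟪b i, x⟫ = 0) : α k * ‖x‖ ^ 2 ≤ ⟪x, T x⟫ := by
  rw [b.inner_apply_self_eq_sum hT, ← b.sum_sq_inner_right, Finset.mul_sum]
  refine Finset.sum_le_sum fun i _ => ?_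
  rcases le_or_gt i k with hik | hki
  · exact mul_le_mul_of_nonneg_right (hα hik) (sq_nonneg _)
  · simp [hx i hki]

lemma inner_apply_self_le (hT : ∀ i, T (b i) = α i • b i) (hα : Antitone α) {k : ι} {x : E}
    (hx : ∀ i, i < k → ⟪b i, x⟫ = 0) : ⟪x, T x⟫ ≤ α k * ‖x‖ ^ 2 := by
  rw [b.inner_apply_self_eq_sum hT, ← b.sum_sq_inner_right, Finset.mul_sum]
  refine Finset.sum_le_sum fun i _ => ?_
  rcases le_or_gt k i with hki | hik
  · exact mul_le_mul_of_nonneg_right (hα hki) (sq_nonneg _)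
  · simp [hx i hik]

end OrthonormalBasis

variable {p : ℕ}

lemma exists_ne_zero_inner_eq_zero (b c : OrthonormalBasis (Fin p) ℝ E) (k : Fin p) :
    ∃ x ≠ 0, (∀ i, k < i → ⟪b i, x⟫ = 0) ∧ ∀ i, i < k → ⟪c i, x⟫ = 0 := by
  have := b.toBasis.finiteDimensional_of_finite
  set V := Submodule.span ℝ (b '' (Finset.Iic k : Set (Fin p)))
  set W := Submodule.span ℝ (c '' (Finset.Ici k : Set (Fin p)))
  have hdim : Module.finrank ℝ E < Module.finrank ℝ V + Module.finrank ℝ W := by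
    rw [b.orthonormal.finrank_span_image, c.orthonormal.finrank_span_image, Fin.card_Iic,
      Fin.card_Ici, Module.finrank_eq_card_basis b.toBasis, Fintype.card_fin]
    omega
  have hVW : ¬Disjoint V W := fun h =>
    (Submodule.finrank_add_finrank_le_of_disjoint h).not_gt hdim
  obtain ⟨x, hxV, hxW, hx0⟩ : ∃ x ∈ V, x ∈ W ∧ x ≠ 0 := by
    simpa [Submodule.disjoint_def] using hVW
  refine ⟨x, hx0, fun i hi => b.orthonormal.inner_eq_zero_of_mem_span_image ?_ hxV,
    fun i hi => c.orthonormal.inner_eq_zero_of_mem_span_image ?_ hxW⟩ <;> simpa using hi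

lemma sub_le_opNorm_sub_of_antitone (b c : OrthonormalBasis (Fin p) ℝ E) {T S : E →L[ℝ] E}
    {α β : Fin p → ℝ} (hT : ∀ i, T (b i) = α i • b i) (hS : ∀ i, S (c i) = β i • c i)
    (hα : Antitone α) (hβ : Antitone β) (k : Fin p) : α k - β k ≤ ‖T - S‖ := by
  obtain ⟨x, hx0, hxb, hxc⟩ := exists_ne_zero_inner_eq_zero b c k
  have hlow := b.le_inner_apply_self (T := T.toLinearMap) hT hα hxb
  have hup := c.inner_apply_self_le (T := S.toLinearMap) hS hβ hxc
  simp only [ContinuousLinearMap.coe_coe] at hlow hup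
  have hdiff : ⟪x, T x⟫ - ⟪x, S x⟫ ≤ ‖T - S‖ * ‖x‖ ^ 2 :=
    calc ⟪x, T x⟫ - ⟪x, S x⟫ = ⟪x, (T - S) x⟫ := by rw [_root_.sub_apply, inner_sub_right]
      _ ≤ ‖x‖ * ‖(T - S) x‖ := real_inner_le_norm _ _
      _ ≤ ‖x‖ * (‖T - S‖ * ‖x‖) := by gcongr; exact (T - S).le_opNorm x
      _ = ‖T - S‖ * ‖x‖ ^ 2 := by ring
  have hx : 0 < ‖x‖ ^ 2 := by positivity
  exact le_of_mul_le_mul_right (by linarith) hx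

lemma abs_sub_le_opNorm_sub_of_antitone (b c : OrthonormalBasis (Fin p) ℝ E) {T S : E →L[ℝ] E}
    {α β : Fin p → ℝ} (hT : ∀ i, T (b i) = α i • b i) (hS : ∀ i, S (c i) = β i • c i)
    (hα : Antitone α) (hβ : Antitone β) (k : Fin p) : |α k - β k| ≤ ‖T - S‖ := by
  refine abs_sub_le_iff.2 ⟨sub_le_opNorm_sub_of_antitone b c hT hS hα hβ k, ?_⟩
  rw [norm_sub_rev]
  exact sub_le_opNorm_sub_of_antitone c b hS hT hβ hα k

lemma exists_perm_antitone_comp (α : Fin p → ℝ) : ∃ τ : Equiv.Perm (Fin p), Antitone (α ∘ τ) :=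
  ⟨Tuple.sort (OrderDual.toDual ∘ α), fun _ _ h => Tuple.monotone_sort (OrderDual.toDual ∘ α) h⟩

theorem exists_perm_abs_sub_le_opNorm_sub (b c : OrthonormalBasis (Fin p) ℝ E) {T S : E →L[ℝ] E}
    {α β : Fin p → ℝ} (hT : ∀ i, T (b i) = α i • b i) (hS : ∀ i, S (c i) = β i • c i) :
    ∃ σ : Equiv.Perm (Fin p), ∀ i, |β (σ i) - α i| ≤ ‖T - S‖ := by
  obtain ⟨τ, hτ⟩ := exists_perm_antitone_comp α
  obtain ⟨ρ, hρ⟩ := exists_perm_antitone_comp β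
  refine ⟨τ.symm.trans ρ, fun i => ?_⟩
  have h := abs_sub_le_opNorm_sub_of_antitone (b.reindex τ.symm) (c.reindex ρ.symm)
    (fun i => by simpa using hT (τ i)) (fun i => by simpa using hS (ρ i)) hτ hρ (τ.symm i)
  simpa [abs_sub_comm] using h

end Weyl

section Eigenbasis

variable {n : Type*} [Fintype n] [DecidableEq n]

lemma toEuclideanCLM_diagonal_basisFun (d : n → ℝ) (i : n) :
    toEuclideanCLM (𝕜 := ℝ) (n := n) (diagonal d) (EuclideanSpace.basisFun n ℝ i) =
      d i • EuclideanSpace.basisFun n ℝ i := by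
  ext j
  simp [ofLp_toEuclideanCLM, Pi.single_apply]

lemma Matrix.IsHermitian.toEuclideanCLM_eigenvectorBasis {M : Matrix n n ℝ} (hM : M.IsHermitian)
    (i : n) :
    toEuclideanCLM (𝕜 := ℝ) (n := n) M (hM.eigenvectorBasis i) =
      hM.eigenvalues i • hM.eigenvectorBasis i := by
  ext j
  simpa [ofLp_toEuclideanCLM] using congr_fun (hM.mulVec_eigenvectorBasis i) j

end Eigenbasis

theorem Matrix.IsHermitian.exists_perm_abs_eigenvalues_sub_le {p : ℕ} (d : Fin p → ℝ)
    {M : Matrix (Fin p) (Fin p) ℝ} (hM : M.IsHermitian) :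
    ∃ σ : Equiv.Perm (Fin p), ∀ i, |hM.eigenvalues (σ i) - d i| ≤ ‖diagonal d - M‖ := by
  obtain ⟨σ, hσ⟩ := exists_perm_abs_sub_le_opNorm_sub (EuclideanSpace.basisFun (Fin p) ℝ)
    hM.eigenvectorBasis (toEuclideanCLM_diagonal_basisFun d) hM.toEuclideanCLM_eigenvectorBasis
  exact ⟨σ, fun i => by simpa only [← map_sub, l2_opNorm_toEuclideanCLM] using hσ i⟩

theorem stmt_5_general {n p r : ℕ} (A : Matrix (Fin n) (Fin n) ℝ)
    (U : Matrix (Fin n) (Fin p) ℝ) (hU : Uᵀ * U = 1)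
    (lam : Fin p → ℝ)
    (hEig : A * U = U * Matrix.diagonal lam)
    (Q : Matrix (Fin n) (Fin r) ℝ) (hQ : Qᵀ * Q = 1)
    (ε : ℝ)
    (hproj : frobNorm (U - Q * Qᵀ * U) ≤ ε)
    (hS : (Uᵀ * (Q * Qᵀ * A * (Q * Qᵀ)) * U).IsHermitian) :
    specNorm (Uᵀ * A * U - Uᵀ * (Q * Qᵀ * A * (Q * Qᵀ)) * U) ≤ 3 * ε * specNorm A ∧
    ∃ σ : Equiv.Perm (Fin p), ∀ i, |hS.eigenvalues (σ i) - lam i| ≤ 3 * ε * specNorm A := by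
  have hUAU : Uᵀ * A * U = diagonal lam := by
    rw [Matrix.mul_assoc, hEig, ← Matrix.mul_assoc, hU, Matrix.one_mul]
  have hE : ‖U - Q * Qᵀ * U‖ ≤ ε := (l2_opNorm_le_frobNorm _).trans hproj
  have hbound : ‖Uᵀ * A * U - Uᵀ * (Q * Qᵀ * A * (Q * Qᵀ)) * U‖ ≤ 3 * ε * ‖A‖ :=
    calc _ ≤ 2 * ‖U - Q * Qᵀ * U‖ * ‖A‖ :=
          l2_opNorm_compress_sub_le A (l2_opNorm_le_one_of_transpose_mul_self hU)
            (by rw [transpose_mul, transpose_transpose]) (l2_opNorm_mul_transpose_le_one hQ)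
      _ ≤ 3 * ε * ‖A‖ := by gcongr; linarith [norm_nonneg (U - Q * Qᵀ * U)]
  obtain ⟨σ, hσ⟩ := hS.exists_perm_abs_eigenvalues_sub_le lam
  simp only [specNorm_eq_l2_opNorm]
  exact ⟨hbound, σ, fun i => (hσ i).trans (hUAU ▸ hbound)⟩

/-- Let `A` be symmetric with `U ∈ ℝ^{n×p}` an orthonormal matrix of
eigenvectors for the `p` largest-magnitude eigenvalues `lam` (sorted by decreasing
magnitude), let `Q` have orthonormal columns and suppose `‖U - QQᵀU‖_F ≤ ε`. Then
`‖UᵀAU - UᵀQQᵀAQQᵀU‖₂ ≤ 3ε‖A‖₂`, and by Weyl's inequality the eigenvalues of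
`UᵀQQᵀAQQᵀU` match the eigenvalues `lam` of `A` to within `3ε‖A‖₂`. -/
theorem stmt_5 {n p r : ℕ} (A : Matrix (Fin n) (Fin n) ℝ) (hA : Aᵀ = A)
    (U : Matrix (Fin n) (Fin p) ℝ) (hU : Uᵀ * U = 1)
    (lam : Fin p → ℝ) (hsort : Antitone fun i => |lam i|)
    (hEig : A * U = U * Matrix.diagonal lam)
    (Q : Matrix (Fin n) (Fin r) ℝ) (hQ : Qᵀ * Q = 1)
    (ε : ℝ) (hε : 0 ≤ ε)
    (hproj : frobNorm (U - Q * Qᵀ * U) ≤ ε)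
    (hS : (Uᵀ * (Q * Qᵀ * A * (Q * Qᵀ)) * U).IsHermitian) :
    specNorm (Uᵀ * A * U - Uᵀ * (Q * Qᵀ * A * (Q * Qᵀ)) * U) ≤ 3 * ε * specNorm A ∧
    ∃ σ : Equiv.Perm (Fin p), ∀ i, |hS.eigenvalues (σ i) - lam i| ≤ 3 * ε * specNorm A :=
  stmt_5_general A U hU lam hEig Q hQ ε hproj hS
end

section
/- Let A ∈ ℝ^{n×n} be symmetric and let Z ∈ ℝ^{n×s} have orthonormal columns, and let Λ̃ ∈ ℝ^{s×s} be diagonal. Suppose ‖AZ - ZΛ̃‖_F ≤ Δ. Then there exists a symmetric matrix B ∈ ℝ^{n×n} such that BZ = ZΛ̃ and ‖A - B‖_F ≤ √2·Δ. -/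
open Matrix

lemma trace_transpose_mul_self {n m : ℕ} (A : Matrix (Fin n) (Fin m) ℝ) :
    Matrix.trace (Aᵀ * A) = ∑ i, ∑ j, (A i j) ^ 2 := by
  simp only [Matrix.trace, Matrix.mul_apply, Matrix.diag, Matrix.transpose_apply, sq]
  rw [Finset.sum_comm]

lemma frobNorm_eq_trace {n m : ℕ} (A : Matrix (Fin n) (Fin m) ℝ) :
    frobNorm A = Real.sqrt (Matrix.trace (Aᵀ * A)) := by
  rw [frobNorm, trace_transpose_mul_self]

lemma trace_transpose_mul_self_nonneg {n m : ℕ} (A : Matrix (Fin n) (Fin m) ℝ) :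
    0 ≤ Matrix.trace (Aᵀ * A) := by
  rw [trace_transpose_mul_self]
  positivity

/-- backward error for approximate invariant subspaces: If `A` is symmetric,
`Z ∈ ℝ^{n×s}` has orthonormal columns, `Λ̃ = diagonal d`, and `‖AZ - ZΛ̃‖_F ≤ Δ`, then there
is a symmetric matrix `B` with `BZ = ZΛ̃` and `‖A - B‖_F ≤ √2·Δ`. -/
theorem stmt_6 {n s : ℕ} (A : Matrix (Fin n) (Fin n) ℝ) (hA : Aᵀ = A)
    (Z : Matrix (Fin n) (Fin s) ℝ) (hZ : Zᵀ * Z = 1)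
    (d : Fin s → ℝ) (Δ : ℝ)
    (hres : frobNorm (A * Z - Z * Matrix.diagonal d) ≤ Δ) :
    ∃ B : Matrix (Fin n) (Fin n) ℝ, Bᵀ = B ∧ B * Z = Z * Matrix.diagonal d ∧
      frobNorm (A - B) ≤ Real.sqrt 2 * Δ := by
  obtain ⟨D, hD⟩ : ∃ D, D = Matrix.diagonal d := ⟨_, rfl⟩
  obtain ⟨R, hR⟩ : ∃ R, R = A * Z - Z * D := ⟨_, rfl⟩
  obtain ⟨S, hSdef⟩ : ∃ S, S = Zᵀ * R := ⟨_, rfl⟩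
  rw [← hD, ← hR] at hres
  -- S is symmetric
  have hS : Sᵀ = S := by
    have h1 : S = Zᵀ * A * Z - D := by
      rw [hSdef, hR, Matrix.mul_sub, ← Matrix.mul_assoc, ← Matrix.mul_assoc, hZ,
        Matrix.one_mul]
    rw [h1, Matrix.transpose_sub, Matrix.transpose_mul, Matrix.transpose_mul,
      Matrix.transpose_transpose, hA, hD, Matrix.diagonal_transpose, Matrix.mul_assoc, ← hD]
  have hRZ : Rᵀ * Z = S := by
    rw [← hS, hSdef, Matrix.transpose_mul, Matrix.transpose_transpose]
  obtain ⟨H, hH⟩ : ∃ H, H = -(R * Zᵀ) - Z * Rᵀ + Z * S * Zᵀ := ⟨_, rfl⟩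
  refine ⟨A + H, ?_, ?_, ?_⟩
  · -- symmetry
    rw [Matrix.transpose_add, hA, hH]
    simp only [Matrix.transpose_add, Matrix.transpose_sub, Matrix.transpose_neg,
      Matrix.transpose_mul, Matrix.transpose_transpose, hS, Matrix.mul_assoc]
    abel
  · -- (A + H) Z = Z D
    have hHZ : H * Z = -R := by
      rw [hH, Matrix.add_mul, Matrix.sub_mul, Matrix.neg_mul,
        Matrix.mul_assoc R Zᵀ Z, hZ, Matrix.mul_one,
        Matrix.mul_assoc Z Rᵀ Z, hRZ,
        Matrix.mul_assoc (Z * S) Zᵀ Z, hZ, Matrix.mul_one]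
      abel
    rw [Matrix.add_mul, hHZ, hR, ← hD]
    abel
  · -- norm bound
    have hDelta : 0 ≤ Δ := le_trans (Real.sqrt_nonneg _) hres
    obtain ⟨W, hW⟩ : ∃ W, W = R - Z * S := ⟨_, rfl⟩
    have hZW : Zᵀ * W = 0 := by
      rw [hW, Matrix.mul_sub, ← hSdef, ← Matrix.mul_assoc, hZ, Matrix.one_mul, sub_self]
    have hWZ : Wᵀ * Z = 0 := by
      have h := congrArg Matrix.transpose hZW
      rwa [Matrix.transpose_mul, Matrix.transpose_transpose, Matrix.transpose_zero] at h
    have hHW : H = -(W * Zᵀ + Z * Rᵀ) := by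
      rw [hH, hW, Matrix.sub_mul]
      abel
    have key : Matrix.trace (Hᵀ * H) = Matrix.trace (Wᵀ * W) + Matrix.trace (Rᵀ * R) := by
      rw [hHW, Matrix.transpose_neg, Matrix.neg_mul, Matrix.mul_neg, neg_neg,
        Matrix.transpose_add, Matrix.transpose_mul, Matrix.transpose_mul,
        Matrix.transpose_transpose, Matrix.transpose_transpose]
      rw [Matrix.add_mul, Matrix.mul_add, Matrix.mul_add, Matrix.trace_add, Matrix.trace_add,
        Matrix.trace_add]
      have t1 : Matrix.trace (Z * Wᵀ * (W * Zᵀ)) = Matrix.trace (Wᵀ * W) := by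
        rw [Matrix.trace_mul_comm, Matrix.mul_assoc, ← Matrix.mul_assoc Zᵀ Z Wᵀ, hZ,
          Matrix.one_mul, Matrix.trace_mul_comm]
      have t2 : Matrix.trace (Z * Wᵀ * (Z * Rᵀ)) = 0 := by
        rw [Matrix.mul_assoc Z Wᵀ (Z * Rᵀ), ← Matrix.mul_assoc Wᵀ Z Rᵀ, hWZ,
          Matrix.zero_mul, Matrix.mul_zero, Matrix.trace_zero]
      have t3 : Matrix.trace (R * Zᵀ * (W * Zᵀ)) = 0 := by
        rw [Matrix.mul_assoc R Zᵀ (W * Zᵀ), ← Matrix.mul_assoc Zᵀ W Zᵀ, hZW,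
          Matrix.zero_mul, Matrix.mul_zero, Matrix.trace_zero]
      have t4 : Matrix.trace (R * Zᵀ * (Z * Rᵀ)) = Matrix.trace (Rᵀ * R) := by
        rw [Matrix.mul_assoc R Zᵀ (Z * Rᵀ), ← Matrix.mul_assoc Zᵀ Z Rᵀ, hZ, Matrix.one_mul,
          Matrix.trace_mul_comm]
      rw [t1, t2, t3, t4]
      ring
    have hWtrace : Matrix.trace (Wᵀ * W) ≤ Matrix.trace (Rᵀ * R) := by
      have expand : Wᵀ * W = Rᵀ * R - S * S := by
        rw [hW, Matrix.transpose_sub, Matrix.transpose_mul, hS]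
        rw [Matrix.sub_mul, Matrix.mul_sub, Matrix.mul_sub]
        rw [← Matrix.mul_assoc Rᵀ Z S, hRZ]
        rw [Matrix.mul_assoc S Zᵀ R, ← hSdef]
        rw [Matrix.mul_assoc S Zᵀ (Z * S), ← Matrix.mul_assoc Zᵀ Z S, hZ, Matrix.one_mul]
        abel
      rw [expand, Matrix.trace_sub]
      have hSS : 0 ≤ Matrix.trace (S * S) := by
        have h := trace_transpose_mul_self_nonneg S
        rwa [hS] at h
      linarith
    have hAB : A - (A + H) = -H := by abel
    rw [hAB, frobNorm_eq_trace, Matrix.transpose_neg, Matrix.neg_mul, Matrix.mul_neg, neg_neg]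
    have hRnn := trace_transpose_mul_self_nonneg R
    have hbound : Matrix.trace (Hᵀ * H) ≤ 2 * Matrix.trace (Rᵀ * R) := by
      rw [key]; linarith
    calc Real.sqrt (Matrix.trace (Hᵀ * H)) ≤ Real.sqrt (2 * Matrix.trace (Rᵀ * R)) :=
          Real.sqrt_le_sqrt hbound
      _ = Real.sqrt 2 * Real.sqrt (Matrix.trace (Rᵀ * R)) := Real.sqrt_mul (by norm_num) _
      _ ≤ Real.sqrt 2 * Δ := by
          have hle : Real.sqrt (Matrix.trace (Rᵀ * R)) ≤ Δ := by
            rw [← frobNorm_eq_trace]; exact hres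
          nlinarith [Real.sqrt_nonneg 2, Real.sqrt_nonneg (Matrix.trace (Rᵀ * R))]
end

section
/- Let A ∈ ℝ^{n×n} be symmetric and Z_p ∈ ℝ^{n×p} have orthonormal columns, and suppose the best rank-(p+1) Frobenius approximation bound holds: for every orthonormal V ∈ ℝ^{n×(p+1)}, ‖AV‖_F² ≤ ∑_{i=1}^{p+1} σ_i(A)². Suppose ‖AZ_p‖_F² ≥ ∑_{i=1}^{p} σ_i(A)² - η for some η ≥ 0. Then every eigenvalue λ of (I - Z_pZ_pᵀ)A(I - Z_pZ_pᵀ) satisfies λ² ≤ σ_{p+1}(A)² + η. -/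
open Matrix

lemma frobNorm_sq {n m : ℕ} (A : Matrix (Fin n) (Fin m) ℝ) :
    frobNorm A ^ 2 = ∑ i, ∑ j, (A i j) ^ 2 := by
  rw [frobNorm, Real.sq_sqrt]
  positivity

/-- Let `A` be symmetric, `Z ∈ ℝ^{n×p}` orthonormal, suppose
`‖AV‖_F² ≤ ∑_{i=1}^{p+1} σᵢ²` for every orthonormal `V ∈ ℝ^{n×(p+1)}` (the rank-(p+1)
Frobenius-best-approximation bound), and `‖AZ‖_F² ≥ ∑_{i=1}^{p} σᵢ² - η` with `η ≥ 0`.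
Then every eigenvalue `lam` of `(I - ZZᵀ)A(I - ZZᵀ)` satisfies `lam² ≤ σ_{p+1}² + η`.
(Here `σ` is 0-indexed: `σ_{p+1}` is `σ p`.) -/
theorem stmt_8 {n p : ℕ} (A : Matrix (Fin n) (Fin n) ℝ) (hA : Aᵀ = A)
    (Z : Matrix (Fin n) (Fin p) ℝ) (hZ : Zᵀ * Z = 1)
    (σ : ℕ → ℝ) (η : ℝ) (hη : 0 ≤ η)
    (hbest : ∀ V : Matrix (Fin n) (Fin (p + 1)) ℝ, Vᵀ * V = 1 →
      frobNorm (A * V) ^ 2 ≤ ∑ i ∈ Finset.range (p + 1), σ i ^ 2)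
    (hlow : (∑ i ∈ Finset.range p, σ i ^ 2) - η ≤ frobNorm (A * Z) ^ 2) :
    ∀ (lam : ℝ) (x : Fin n → ℝ), x ≠ 0 →
      ((1 - Z * Zᵀ) * A * (1 - Z * Zᵀ)).mulVec x = lam • x →
      lam ^ 2 ≤ σ p ^ 2 + η := by
  intro lam x hx hev
  by_cases hlam : lam = 0
  · subst hlam
    have : (0:ℝ) ≤ σ p ^ 2 + η := by positivity
    simpa using this
  set P : Matrix (Fin n) (Fin n) ℝ := 1 - Z * Zᵀ with hPdef
  have hMM : (Z * Zᵀ) * (Z * Zᵀ) = Z * Zᵀ := by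
    rw [Matrix.mul_assoc, ← Matrix.mul_assoc Zᵀ Z Zᵀ, hZ, Matrix.one_mul]
  have hPP : P * P = P := by
    simp only [hPdef, Matrix.sub_mul, Matrix.mul_sub, Matrix.one_mul, Matrix.mul_one, hMM]
    abel
  have hPt : Pᵀ = P := by
    simp [hPdef, Matrix.transpose_sub, Matrix.transpose_mul]
  -- P x = x
  have hPx : P.mulVec x = x := by
    have h1 : (P * A * P).mulVec x = lam • x := hev
    have h2 : P.mulVec ((P * A * P).mulVec x) = (P * A * P).mulVec x := by
      rw [Matrix.mulVec_mulVec, ← Matrix.mul_assoc, ← Matrix.mul_assoc, hPP]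
    rw [h1, Matrix.mulVec_smul] at h2
    have := smul_right_injective (Fin n → ℝ) hlam h2
    exact this
  -- Zᵀ x = 0
  have hZx : Zᵀ.mulVec x = 0 := by
    have hZZx : (Z * Zᵀ).mulVec x = 0 := by
      have h : P.mulVec x = x - (Z * Zᵀ).mulVec x := by
        simp [hPdef, Matrix.sub_mulVec]
      rw [hPx] at h
      exact sub_eq_self.mp h.symm
    have : Zᵀ.mulVec ((Z * Zᵀ).mulVec x) = Zᵀ.mulVec x := by
      rw [Matrix.mulVec_mulVec, ← Matrix.mul_assoc, hZ, Matrix.one_mul]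
    rw [hZZx] at this
    rw [← this]
    simp
  set y : Fin n → ℝ := A.mulVec x with hy
  have hPy : P.mulVec y = lam • x := by
    have : (P * A * P).mulVec x = P.mulVec (A.mulVec (P.mulVec x)) := by
      rw [Matrix.mulVec_mulVec, Matrix.mulVec_mulVec]
    rw [this, hPx] at hev
    exact hev
  -- norm inequality : ∑ (P y)² ≤ ∑ y²
  have hPyPy : ∑ i, (P.mulVec y i) ^ 2 = (P.mulVec y) ⬝ᵥ y := by
    have h1 : (P.mulVec y) ⬝ᵥ (P.mulVec y) = ((P * P).mulVec y) ⬝ᵥ y := by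
      rw [Matrix.dotProduct_mulVec, ← Matrix.mulVec_transpose, hPt, Matrix.mulVec_mulVec]
    rw [hPP] at h1
    rw [← h1]
    simp [dotProduct, sq]
  have hle : ∑ i, (P.mulVec y i) ^ 2 ≤ ∑ i, (y i) ^ 2 := by
    have hz : (0:ℝ) ≤ ∑ i, (y i - P.mulVec y i) ^ 2 := by positivity
    have expand : ∑ i, (y i - P.mulVec y i) ^ 2
        = ∑ i, (y i) ^ 2 - 2 * ((P.mulVec y) ⬝ᵥ y) + ∑ i, (P.mulVec y i) ^ 2 := by
      simp only [dotProduct, Finset.mul_sum]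
      rw [← Finset.sum_sub_distrib, ← Finset.sum_add_distrib]
      apply Finset.sum_congr rfl
      intro i _
      ring
    rw [← hPyPy] at expand
    linarith
  -- norms of x
  have hc2 : (0:ℝ) < ∑ i, x i ^ 2 := by
    have : ∃ i, x i ≠ 0 := by
      by_contra h
      push_neg at h
      exact hx (funext h)
    obtain ⟨i, hi⟩ := this
    apply Finset.sum_pos' (fun j _ => by positivity)
    exact ⟨i, Finset.mem_univ i, by positivity⟩
  set c2 : ℝ := ∑ i, x i ^ 2 with hc2def
  set c : ℝ := Real.sqrt c2 with hcdef
  have hcpos : 0 < c := Real.sqrt_pos.mpr hc2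
  have hcsq : c ^ 2 = c2 := Real.sq_sqrt hc2.le
  -- the matrix V
  set V : Matrix (Fin n) (Fin (p + 1)) ℝ :=
    Matrix.of (fun i j => Fin.lastCases (c⁻¹ * x i) (fun k => Z i k) j) with hVdef
  have hVlast : ∀ i, V i (Fin.last p) = c⁻¹ * x i := fun i => by
    simp [hVdef]
  have hVcast : ∀ i (k : Fin p), V i k.castSucc = Z i k := fun i k => by
    simp [hVdef]
  have hV : Vᵀ * V = 1 := by
    ext j k
    rw [Matrix.mul_apply]
    simp only [Matrix.transpose_apply]
    induction j using Fin.lastCases with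
    | last =>
      induction k using Fin.lastCases with
      | last =>
        simp only [hVlast, Matrix.one_apply_eq]
        have : ∑ i, (c⁻¹ * x i) * (c⁻¹ * x i) = c⁻¹ ^ 2 * c2 := by
          rw [hc2def, Finset.mul_sum]
          apply Finset.sum_congr rfl
          intro i _
          ring
        rw [this, ← hcsq]
        field_simp
      | cast k =>
        have hne : Fin.last p ≠ k.castSucc := (Fin.castSucc_lt_last k).ne'
        rw [Matrix.one_apply_ne hne]
        simp only [hVlast, hVcast]
        have : ∑ i, (c⁻¹ * x i) * Z i k = c⁻¹ * (Zᵀ.mulVec x k) := by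
          rw [Matrix.mulVec, dotProduct, Finset.mul_sum]
          apply Finset.sum_congr rfl
          intro i _
          simp [Matrix.transpose_apply]
          ring
        rw [this, hZx]
        simp
    | cast j =>
      induction k using Fin.lastCases with
      | last =>
        have hne : j.castSucc ≠ Fin.last p := (Fin.castSucc_lt_last j).ne
        rw [Matrix.one_apply_ne hne]
        simp only [hVlast, hVcast]
        have : ∑ i, Z i j * (c⁻¹ * x i) = c⁻¹ * (Zᵀ.mulVec x j) := by
          rw [Matrix.mulVec, dotProduct, Finset.mul_sum]
          apply Finset.sum_congr rfl
          intro i _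
          simp [Matrix.transpose_apply]
          ring
        rw [this, hZx]
        simp
      | cast k =>
        simp only [hVcast]
        have h1 : ∑ i, Z i j * Z i k = (Zᵀ * Z) j k := by
          rw [Matrix.mul_apply]
          simp [Matrix.transpose_apply]
        rw [h1, hZ]
        simp [Matrix.one_apply, Fin.castSucc_inj]
  -- Frobenius split
  have hsplit : frobNorm (A * V) ^ 2 = frobNorm (A * Z) ^ 2 + c⁻¹ ^ 2 * ∑ i, y i ^ 2 := by
    rw [frobNorm_sq, frobNorm_sq]
    have hrow : ∀ i : Fin n, ∑ j : Fin (p + 1), ((A * V) i j) ^ 2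
        = (∑ j : Fin p, ((A * Z) i j) ^ 2) + c⁻¹ ^ 2 * (y i) ^ 2 := by
      intro i
      rw [Fin.sum_univ_castSucc]
      congr 1
      · apply Finset.sum_congr rfl
        intro j _
        congr 1
        rw [Matrix.mul_apply, Matrix.mul_apply]
        apply Finset.sum_congr rfl
        intro k _
        rw [hVcast]
      · have : (A * V) i (Fin.last p) = c⁻¹ * y i := by
          rw [Matrix.mul_apply, hy, Matrix.mulVec, dotProduct, Finset.mul_sum]
          apply Finset.sum_congr rfl
          intro k _
          rw [hVlast]
          ring
        rw [this]
        ring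
    calc ∑ i, ∑ j, ((A * V) i j) ^ 2
        = ∑ i, ((∑ j : Fin p, ((A * Z) i j) ^ 2) + c⁻¹ ^ 2 * (y i) ^ 2) := by
          exact Finset.sum_congr rfl (fun i _ => hrow i)
      _ = (∑ i, ∑ j, ((A * Z) i j) ^ 2) + c⁻¹ ^ 2 * ∑ i, y i ^ 2 := by
          rw [Finset.sum_add_distrib, Finset.mul_sum]
  -- bound the pieces
  have hAV := hbest V hV
  rw [Finset.sum_range_succ] at hAV
  have hyx : ∑ i, (P.mulVec y i) ^ 2 = lam ^ 2 * c2 := by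
    rw [hPy, hc2def, Finset.mul_sum]
    apply Finset.sum_congr rfl
    intro i _
    simp [Pi.smul_apply, smul_eq_mul]
    ring
  have hyub : c⁻¹ ^ 2 * ∑ i, y i ^ 2 ≤ σ p ^ 2 + η := by
    rw [hsplit] at hAV
    linarith
  have hcinv : c⁻¹ ^ 2 = c2⁻¹ := by
    rw [← hcsq]
    simp [inv_pow]
  rw [hcinv] at hyub
  have hysum : ∑ i, y i ^ 2 ≤ c2 * (σ p ^ 2 + η) := by
    have h := mul_le_mul_of_nonneg_left hyub hc2.le
    rw [← mul_assoc, mul_inv_cancel₀ hc2.ne', one_mul] at h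
    exact h
  have : lam ^ 2 * c2 ≤ c2 * (σ p ^ 2 + η) := by
    rw [← hyx]
    exact hle.trans hysum
  nlinarith [hc2]
end
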